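/- Let (X,p,E) be a p-semimonotone lattice-normed ordered vector space with p-closed positive cone satisfying the p-Levi property. Then X is op-continuous: every net order-converging to 0 in X p-converges to 0. -/

import Mathlib

/-- A net `x : A → G` in an ordered additive group order-converges to `0`:
there exist two nonempty downward-directed sets `D₁, D₂` (the ranges of two
decreasing nets) with infimum `0` such that the net is eventually squeezed
between `-y` and `z` for all `y ∈ D₁`, `z ∈ D₂`. -/
def OConv0 {A G : Type} [Preorder A] [AddCommGroup G] [PartialOrder G]
    (x : A → G) : Prop :=
  ∃ D₁ D₂ : Set G, D₁.Nonempty ∧ D₂.Nonempty ∧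
    DirectedOn (· ≥ ·) D₁ ∧ DirectedOn (· ≥ ·) D₂ ∧
    IsGLB D₁ 0 ∧ IsGLB D₂ 0 ∧
    ∀ y ∈ D₁, ∀ z ∈ D₂, ∃ a₀ : A, ∀ a : A, a₀ ≤ a → -y ≤ x a ∧ x a ≤ z

/-- A net `x : A → X` p-converges to `l` if `p (x a - l)` order-converges to `0` in `E`. -/
def PConvTo {A X E : Type} [Preorder A] [AddCommGroup X]
    [AddCommGroup E] [PartialOrder E] (p : X → E) (x : A → X) (l : X) : Prop :=
  OConv0 (fun a => p (x a - l))

/-- A net p-converges to `0`. -/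
def PConv0 {A X E : Type} [Preorder A] [AddCommGroup X]
    [AddCommGroup E] [PartialOrder E] (p : X → E) (x : A → X) : Prop :=
  OConv0 (fun a => p (x a))

/-- A set `S ⊆ X` is p-closed: p-limits of nets in `S` belong to `S`. -/
def PClosed {X E : Type} [AddCommGroup X] [AddCommGroup E] [PartialOrder E]
    (p : X → E) (S : Set X) : Prop :=
  ∀ (A : Type) [Preorder A] [Nonempty A] [IsDirected A (· ≤ ·)]
    (a : A → X) (x : X), (∀ i, a i ∈ S) → PConvTo p a x → x ∈ S

/-- A net is p-Cauchy if the double net `x α - x α'` p-converges to `0`. -/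
def PCauchy {A X E : Type} [Preorder A] [AddCommGroup X]
    [AddCommGroup E] [PartialOrder E] (p : X → E) (x : A → X) : Prop :=
  OConv0 (fun q : A × A => p (x q.1 - x q.2))

/-- `X` is op-continuous: order convergence to `0` in `X` implies p-convergence to `0`. -/
def OpCont {X E : Type} [AddCommGroup X] [PartialOrder X]
    [AddCommGroup E] [PartialOrder E] (p : X → E) : Prop :=
  ∀ (A : Type) [Preorder A] [Nonempty A] [IsDirected A (· ≤ ·)] (x : A → X),
    OConv0 x → PConv0 p x

/-- `X` is p-complete: every p-Cauchy net p-converges. -/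
def PComplete {X E : Type} [AddCommGroup X]
    [AddCommGroup E] [PartialOrder E] (p : X → E) : Prop :=
  ∀ (A : Type) [Preorder A] [Nonempty A] [IsDirected A (· ≤ ·)] (x : A → X),
    PCauchy p x → ∃ l : X, PConvTo p x l

/-- `X` is a p-Levi space: every p-bounded increasing net in `X⁺` p-converges. -/
def PLevi {X E : Type} [AddCommGroup X] [PartialOrder X]
    [AddCommGroup E] [PartialOrder E] (p : X → E) : Prop :=
  ∀ (A : Type) [Preorder A] [Nonempty A] [IsDirected A (· ≤ ·)] (x : A → X),
    (∀ a, 0 ≤ x a) → Monotone x → (∃ e : E, ∀ a, p (x a) ≤ e) →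
    ∃ l : X, PConvTo p x l

/-!
If `-y ≤ x_α ≤ z` eventually, with `y, z` running through sets decreasing to `0`, then
semimonotonicity and the triangle inequality give `p x_α ≤ 2M p (y + z)`; so it suffices that
`p w ↓ 0` whenever `w ↓ 0` in `X`. For `w ≤ w₀` the net `w₀ - w` increases and is `p`-bounded by
`M p w₀`, so by the Levi property `w` `p`-converges to some `u`. Closedness of the cone gives
`0 ≤ u`, and, applied to the tails `w' - w ≥ 0`, also `u ≤ w'` for every `w'`; hence `u = 0`.
-/

open Set OrderDual
open scoped Pointwise

def DecreasesToZero {G : Type*} [Zero G] [Preorder G] (D : Set G) : Prop :=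
  D.Nonempty ∧ DirectedOn (· ≥ ·) D ∧ IsGLB D 0

namespace DecreasesToZero

variable {G : Type*} [Zero G] [Preorder G] {D : Set G}

theorem nonneg (hD : DecreasesToZero D) {d : G} (hd : d ∈ D) : 0 ≤ d :=
  hD.2.2.1 hd

theorem inter_Iic (hD : DecreasesToZero D) {d₀ : G} (hd₀ : d₀ ∈ D) :
    DecreasesToZero (D ∩ Iic d₀) := by
  obtain ⟨-, hdir, hglb⟩ := hD
  refine ⟨⟨d₀, hd₀, le_rfl⟩, ?_, fun d hd => hglb.1 hd.1, fun b hb => hglb.2 fun d hd => ?_⟩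
  · rintro a ⟨ha, had₀⟩ b ⟨hb, -⟩
    obtain ⟨c, hc, hca, hcb⟩ := hdir a ha b hb
    exact ⟨c, ⟨hc, hca.trans had₀⟩, hca, hcb⟩
  · obtain ⟨c, hc, hcd₀, hcd⟩ := hdir d₀ hd₀ d hd
    exact (hb ⟨hc, hcd₀⟩).trans hcd

end DecreasesToZero

instance Set.Ici.isDirected_le {A : Type*} [Preorder A] [IsDirected A (· ≤ ·)] (a : A) :
    IsDirected (Ici a) (· ≤ ·) :=
  ⟨fun b c => by
    obtain ⟨d, hbd, hcd⟩ := exists_ge_ge (b : A) c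
    exact ⟨⟨d, b.2.trans hbd⟩, hbd, hcd⟩⟩

section OrderedGroup

variable {G : Type} [AddCommGroup G] [PartialOrder G]

theorem oConv0_iff {A : Type} [Preorder A] (x : A → G) :
    OConv0 x ↔ ∃ D₁ D₂ : Set G, DecreasesToZero D₁ ∧ DecreasesToZero D₂ ∧
      ∀ y ∈ D₁, ∀ z ∈ D₂, ∃ a₀, ∀ a, a₀ ≤ a → -y ≤ x a ∧ x a ≤ z := by
  constructor
  · rintro ⟨D₁, D₂, hne₁, hne₂, hdir₁, hdir₂, hglb₁, hglb₂, h⟩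
    exact ⟨D₁, D₂, ⟨hne₁, hdir₁, hglb₁⟩, ⟨hne₂, hdir₂, hglb₂⟩, h⟩
  · rintro ⟨D₁, D₂, ⟨hne₁, hdir₁, hglb₁⟩, ⟨hne₂, hdir₂, hglb₂⟩, h⟩
    exact ⟨D₁, D₂, hne₁, hne₂, hdir₁, hdir₂, hglb₁, hglb₂, h⟩

theorem OConv0.exists_le {A : Type} [Preorder A] {x : A → G} (hx : OConv0 x) :
    ∃ F : Set G, DecreasesToZero F ∧ ∀ f ∈ F, ∃ a, x a ≤ f := by
  obtain ⟨D₁, F, ⟨⟨y, hy⟩, -⟩, hF, h⟩ := (oConv0_iff x).1 hx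
  refine ⟨F, hF, fun f hf => ?_⟩
  obtain ⟨a, ha⟩ := h y hy f hf
  exact ⟨a, (ha a le_rfl).2⟩

theorem OConv0.comp {A B : Type} [Preorder A] [Preorder B] {x : A → G} (hx : OConv0 x)
    (φ : B → A) (hφ : ∀ a₀, ∃ b₀, ∀ b, b₀ ≤ b → a₀ ≤ φ b) : OConv0 (x ∘ φ) := by
  obtain ⟨D₁, D₂, hD₁, hD₂, h⟩ := (oConv0_iff x).1 hx
  refine (oConv0_iff _).2 ⟨D₁, D₂, hD₁, hD₂, fun y hy z hz => ?_⟩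
  obtain ⟨a₀, ha₀⟩ := h y hy z hz
  obtain ⟨b₀, hb₀⟩ := hφ a₀
  exact ⟨b₀, fun b hb => ha₀ (φ b) (hb₀ b hb)⟩

theorem oConv0_of_forall_le {A : Type} [Preorder A] {x : A → G} {F : Set G}
    (hF : DecreasesToZero F) (hx : ∀ a, 0 ≤ x a) (h : ∀ f ∈ F, ∃ a₀, ∀ a, a₀ ≤ a → x a ≤ f) :
    OConv0 x := by
  refine (oConv0_iff x).2 ⟨{0}, F, ⟨singleton_nonempty 0, directedOn_singleton 0,
    isGLB_singleton⟩, hF, ?_⟩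
  rintro y rfl z hz
  obtain ⟨a₀, ha₀⟩ := h z hz
  exact ⟨a₀, fun a ha => ⟨by simpa using hx a, ha₀ a ha⟩⟩

variable [AddLeftMono G]

namespace DecreasesToZero

theorem add {D₁ D₂ : Set G} (hD₁ : DecreasesToZero D₁) (hD₂ : DecreasesToZero D₂) :
    DecreasesToZero (D₁ + D₂) := by
  obtain ⟨hne₁, hdir₁, hglb₁⟩ := hD₁
  obtain ⟨hne₂, hdir₂, hglb₂⟩ := hD₂
  refine ⟨hne₁.add hne₂, ?_, ?_, fun b hb => ?_⟩
  · rintro _ ⟨y, hy, z, hz, rfl⟩ _ ⟨y', hy', z', hz', rfl⟩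
    obtain ⟨y'', hy'', hyy, hyy'⟩ := hdir₁ y hy y' hy'
    obtain ⟨z'', hz'', hzz, hzz'⟩ := hdir₂ z hz z' hz'
    exact ⟨y'' + z'', add_mem_add hy'' hz'', add_le_add hyy hzz, add_le_add hyy' hzz'⟩
  · rintro _ ⟨y, hy, z, hz, rfl⟩
    exact add_nonneg (hglb₁.1 hy) (hglb₂.1 hz)
  · refine hglb₂.2 fun z hz => sub_nonpos.1 (hglb₁.2 fun y hy => ?_)
    exact sub_le_iff_le_add.2 (hb (add_mem_add hy hz))

theorem le_zero_of_forall_le_nsmul {F : Set G} (hF : DecreasesToZero F) :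
    ∀ (k : ℕ) {u : G}, (∀ f ∈ F, u ≤ k • f) → u ≤ 0 := by
  obtain ⟨⟨f₀, hf₀⟩, hdir, hglb⟩ := hF
  intro k
  induction k with
  | zero => exact fun h => by simpa using h f₀ hf₀
  | succ k ih =>
    refine fun {u} h => ih fun f hf => sub_nonpos.1 (hglb.2 fun g hg => ?_)
    obtain ⟨c, hc, hcf, hcg⟩ := hdir f hf g hg
    calc u - k • f ≤ (k + 1) • c - k • c := sub_le_sub (h c hc) (nsmul_le_nsmul_right hcf k)
      _ = c := by rw [succ_nsmul, add_sub_cancel_left]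
      _ ≤ g := hcg

theorem image_nsmul {F : Set G} (hF : DecreasesToZero F) (k : ℕ) :
    DecreasesToZero ((k • ·) '' F) := by
  refine ⟨hF.1.image _, ?_, ?_, fun u hu => hF.le_zero_of_forall_le_nsmul k
    fun f hf => hu (mem_image_of_mem _ hf)⟩
  · rintro _ ⟨f, hf, rfl⟩ _ ⟨g, hg, rfl⟩
    obtain ⟨c, hc, hcf, hcg⟩ := hF.2.1 f hf g hg
    exact ⟨k • c, mem_image_of_mem _ hc, nsmul_le_nsmul_right hcf k, nsmul_le_nsmul_right hcg k⟩
  · rintro _ ⟨f, hf, rfl⟩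
    exact nsmul_nonneg (hF.nonneg hf) k

end DecreasesToZero

end OrderedGroup

section LatticeNormed

variable {X E : Type} [AddCommGroup X] [AddCommGroup E] [PartialOrder E] {p : X → E}

theorem PConvTo.const_sub (hp_neg : ∀ v, p (-v) = p v) {A : Type} [Preorder A] {x : A → X}
    {l : X} (hx : PConvTo p x l) (c : X) : PConvTo p (fun a => c - x a) (c - l) := by
  have h : ∀ a, p (c - x a - (c - l)) = p (x a - l) := fun a => by
    rw [sub_sub_sub_cancel_left, ← neg_sub, hp_neg]
  simpa only [PConvTo, h] using hx

theorem PClosed.mem_of_eventually_mem {S : Set X} (hS : PClosed p S) {A : Type} [Preorder A]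
    [IsDirected A (· ≤ ·)] {x : A → X} {l : X} (hx : PConvTo p x l) (a₁ : A)
    (h : ∀ a, a₁ ≤ a → x a ∈ S) : l ∈ S := by
  have : Nonempty (Ici a₁) := ⟨⟨a₁, le_rfl⟩⟩
  refine hS (Ici a₁) (fun a => x a) l (fun a => h a a.2) ?_
  refine OConv0.comp hx Subtype.val fun a₀ => ?_
  obtain ⟨b₀, hab₀, ha₁b₀⟩ := exists_ge_ge a₀ a₁
  exact ⟨⟨b₀, ha₁b₀⟩, fun b hb => hab₀.trans hb⟩

/- `E` is not an ordered `ℝ`-module, so monotonicity of `c • ·` is not available; it is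
recovered from `0 ≤ p ((⌈M⌉₊ - M) • x)`. -/
theorem smul_le_natCeil_nsmul [Module ℝ X] [Module ℝ E] [AddLeftMono E]
    (hp_nonneg : ∀ x, 0 ≤ p x) (hp_smul : ∀ (c : ℝ) (x : X), p (c • x) = |c| • p x) (M : ℝ)
    (x : X) : M • p x ≤ ⌈M⌉₊ • p x := by
  have h := hp_nonneg ((⌈M⌉₊ - M) • x)
  rwa [hp_smul, abs_of_nonneg (sub_nonneg.2 (Nat.le_ceil M)), sub_smul, Nat.cast_smul_eq_nsmul,
    sub_nonneg] at h

variable [PartialOrder X] [AddLeftMono X]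

theorem p_le_nsmul_of_neg_le_of_le [AddLeftMono E] (hp_add : ∀ x y, p (x + y) ≤ p x + p y)
    (hp_neg : ∀ v, p (-v) = p v) {n : ℕ} (hsemi : ∀ x y : X, 0 ≤ y → y ≤ x → p y ≤ n • p x)
    {v y z : X} (hy : 0 ≤ y) (hz : 0 ≤ z) (hv : -y ≤ v ∧ v ≤ z) :
    p v ≤ (n + n) • p (y + z) := by
  have hvy : 0 ≤ v + y := neg_le_iff_add_nonneg.1 hv.1
  have hvyz : v + y ≤ y + z := (add_le_add_left hv.2 y).trans_eq (add_comm z y)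
  calc p v = p ((v + y) + -y) := by rw [add_neg_cancel_right]
    _ ≤ p (v + y) + p y := by rw [← hp_neg y]; exact hp_add _ _
    _ ≤ n • p (y + z) + n • p (y + z) :=
      add_le_add (hsemi _ _ hvy hvyz) (hsemi _ _ hy (le_add_of_nonneg_right hz))
    _ = (n + n) • p (y + z) := (add_nsmul _ _ _).symm

theorem DecreasesToZero.pConv0_val (hp_neg : ∀ v, p (-v) = p v) {n : ℕ}
    (hsemi : ∀ x y : X, 0 ≤ y → y ≤ x → p y ≤ n • p x) (hclosed : PClosed p {x : X | 0 ≤ x})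
    (hLevi : PLevi p) {D : Set X} (hD : DecreasesToZero D) (hbdd : BddAbove D) :
    PConv0 p (fun d : (↥D)ᵒᵈ => ((ofDual d : D) : X)) := by
  obtain ⟨d₀, hd₀⟩ := hbdd
  have : Nonempty (↥D)ᵒᵈ := hD.1.to_subtype
  have : IsDirected (↥D)ᵒᵈ (· ≤ ·) := hD.2.1.isCodirectedOrder
  have hpos : ∀ d : (↥D)ᵒᵈ, 0 ≤ d₀ - ((ofDual d : D) : X) := fun d =>
    sub_nonneg.2 (hd₀ (ofDual d).2)
  obtain ⟨l, hl⟩ := hLevi _ (fun d => d₀ - ((ofDual d : D) : X)) hpos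
    (fun _ _ h => sub_le_sub_left (Subtype.coe_le_coe.2 h) d₀)
    ⟨n • p d₀, fun d => hsemi _ _ (hpos d) (sub_le_self _ (hD.nonneg (ofDual d).2))⟩
  have hu : PConvTo p (fun d : (↥D)ᵒᵈ => ((ofDual d : D) : X)) (d₀ - l) := by
    simpa using hl.const_sub hp_neg d₀
  have hu_nonneg : 0 ≤ d₀ - l := hclosed _ _ _ (fun d => hD.nonneg (ofDual d).2) hu
  have hu_lb : d₀ - l ∈ lowerBounds D := fun d hd => sub_nonneg.1 <|
    hclosed.mem_of_eventually_mem (hu.const_sub hp_neg d) (toDual ⟨d, hd⟩)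
      fun d' hd' => sub_nonneg.2 hd'
  have hu_zero : d₀ - l = 0 := le_antisymm (hD.2.2.2 hu_lb) hu_nonneg
  simpa [PConvTo, PConv0, hu_zero] using hu

theorem DecreasesToZero.exists_p_le (hp_neg : ∀ v, p (-v) = p v) {n : ℕ}
    (hsemi : ∀ x y : X, 0 ≤ y → y ≤ x → p y ≤ n • p x) (hclosed : PClosed p {x : X | 0 ≤ x})
    (hLevi : PLevi p) {D : Set X} (hD : DecreasesToZero D) :
    ∃ F : Set E, DecreasesToZero F ∧ ∀ f ∈ F, ∃ w ∈ D, p w ≤ f := by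
  obtain ⟨d₀, hd₀⟩ := hD.1
  obtain ⟨F, hF, hFD⟩ := ((hD.inter_Iic hd₀).pConv0_val hp_neg hsemi hclosed hLevi
    ⟨d₀, fun _ hd => hd.2⟩).exists_le
  refine ⟨F, hF, fun f hf => ?_⟩
  obtain ⟨d, hd⟩ := hFD f hf
  exact ⟨_, (ofDual d).2.1, hd⟩

end LatticeNormed

theorem stmt8_general {X E : Type}
    [AddCommGroup X] [PartialOrder X] [CovariantClass X X (· + ·) (· ≤ ·)] [Module ℝ X]
    [AddCommGroup E] [Lattice E] [CovariantClass E E (· + ·) (· ≤ ·)] [Module ℝ E]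
    (p : X → E)
    (hp_nonneg : ∀ x, 0 ≤ p x)
    (hp_smul : ∀ (c : ℝ) (x : X), p (c • x) = |c| • p x)
    (hp_add : ∀ x y, p (x + y) ≤ p x + p y)
    (M : ℝ)
    (hsemi : ∀ x y : X, 0 ≤ y → y ≤ x → p y ≤ M • p x)
    (hclosed : PClosed p {x : X | 0 ≤ x})
    (hLevi : PLevi p) :
    OpCont p := by
  intro A _ _ _ x hx
  have hp_neg : ∀ v, p (-v) = p v := fun v => by simpa using hp_smul (-1) v
  obtain ⟨n, hsemi_n⟩ : ∃ n : ℕ, ∀ x y : X, 0 ≤ y → y ≤ x → p y ≤ n • p x :=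
    ⟨⌈M⌉₊, fun x y hy hyx =>
      (hsemi x y hy hyx).trans (smul_le_natCeil_nsmul hp_nonneg hp_smul M x)⟩
  obtain ⟨D₁, D₂, hD₁, hD₂, hx⟩ := (oConv0_iff x).1 hx
  obtain ⟨F, hF, hFD⟩ := (hD₁.add hD₂).exists_p_le hp_neg hsemi_n hclosed hLevi
  refine oConv0_of_forall_le (hF.image_nsmul (n + n)) (fun a => hp_nonneg (x a)) ?_
  rintro _ ⟨f, hf, rfl⟩
  obtain ⟨_, ⟨y, hy, z, hz, rfl⟩, hyz⟩ := hFD f hf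
  obtain ⟨a₀, ha₀⟩ := hx y hy z hz
  refine ⟨a₀, fun a ha => ?_⟩
  calc p (x a) ≤ (n + n) • p (y + z) := p_le_nsmul_of_neg_le_of_le hp_add hp_neg hsemi_n
        (hD₁.nonneg hy) (hD₂.nonneg hz) (ha₀ a ha)
    _ ≤ (n + n) • f := nsmul_le_nsmul_right hyz _

/-- a p-semimonotone p-Levi LNOVS with p-closed positive cone
(over Dedekind complete `E`) is op-continuous. -/
theorem stmt8 {X E : Type}
    [AddCommGroup X] [PartialOrder X] [CovariantClass X X (· + ·) (· ≤ ·)] [Module ℝ X]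
    [AddCommGroup E] [Lattice E] [CovariantClass E E (· + ·) (· ≤ ·)] [Module ℝ E]
    (hE : ∀ S : Set E, S.Nonempty → BddAbove S → ∃ s, IsLUB S s)
    (p : X → E)
    (hp_nonneg : ∀ x, 0 ≤ p x)
    (hp_zero : ∀ x, p x = 0 ↔ x = 0)
    (hp_smul : ∀ (c : ℝ) (x : X), p (c • x) = |c| • p x)
    (hp_add : ∀ x y, p (x + y) ≤ p x + p y)
    (M : ℝ)
    (hsemi : ∀ x y : X, 0 ≤ y → y ≤ x → p y ≤ M • p x)
    (hclosed : PClosed p {x : X | 0 ≤ x})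
    (hLevi : PLevi p) :
    OpCont p :=
  stmt8_general p hp_nonneg hp_smul hp_add M hsemi hclosed hLevi
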